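/- Let N ≥ 2 be an integer and ζ = exp(2πi/N). Then Σ_{l=1}^{N−1} ζ^l/(ζ^l − 1)² = (1 − N²)/12, i.e. S_{2,1} = (1 − N²)/12. -/

import Mathlib

open Real Finset

/-! For an `N`-th root of unity `x ≠ 1`, telescoping twice gives
`(x - 1)² · ∑_{j<N} j (N - j) xʲ = 2 N x`, so `x / (x - 1)²` is a linear combination of the
powers `xʲ` with weights `j (N - j) / 2N`. Summing over `x = ζˡ`, `1 ≤ l < N`, every power
`ζˡʲ` with `0 < j < N` contributes `∑_{l=1}^{N-1} ζˡʲ = -1`, so the sum equals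
`-(1/2N) ∑_{j<N} j (N - j) = -(N³ - N)/12N = (1 - N²)/12`. -/

noncomputable def S (N n k : ℕ) : ℂ :=
  ∑ l ∈ Finset.Ico 1 N,
    (Complex.exp (2 * π * Complex.I / N)) ^ (l * k) /
      ((Complex.exp (2 * π * Complex.I / N)) ^ l - 1) ^ n

section CommRing

variable {R : Type*} [CommRing R]

theorem sum_range_succ_mul_sub (f : ℕ → R) (n : ℕ) :
    ∑ j ∈ range (n + 1), f j * ((n : R) + 1 - j) =
      ∑ j ∈ range n, f j * ((n : R) - j) + ∑ j ∈ range (n + 1), f j := by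
  simp_rw [add_sub_right_comm, mul_add, mul_one, sum_add_distrib]
  rw [sum_range_succ (fun j => f j * ((n : R) - j)), sub_self, mul_zero, add_zero]

theorem sub_one_mul_sum_range_mul_pow (x : R) (N : ℕ) :
    (x - 1) * ∑ j ∈ range N, (j : R) * x ^ j =
      ((N : R) - 1) * x ^ N + 1 - ∑ j ∈ range N, x ^ j := by
  induction N with
  | zero => simp
  | succ n ih =>
    rw [sum_range_succ, sum_range_succ]
    push_cast
    linear_combination ih

theorem sub_one_sq_mul_sum_range_mul_pow_mul_sub (x : R) (N : ℕ) :
    (x - 1) ^ 2 * ∑ j ∈ range N, (j : R) * x ^ j * (N - j) =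
      ((N : R) - 1) * x ^ (N + 1) - 2 * x ^ N + ((N : R) + 1) * x + 2 -
        2 * ∑ j ∈ range N, x ^ j := by
  induction N with
  | zero => simp; ring
  | succ n ih =>
    have h := sub_one_mul_sum_range_mul_pow x (n + 1)
    push_cast at h ⊢
    rw [sum_range_succ_mul_sub, sum_range_succ (fun j => x ^ j)]
    linear_combination ih + (x - 1) * h - geom_sum_mul x (n + 1)

theorem six_mul_sum_range_mul_sub (N : ℕ) :
    6 * ∑ j ∈ range N, (j : R) * (N - j) = (N : R) ^ 3 - N := by
  induction N with
  | zero => simp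
  | succ n ih =>
    have gauss : (∑ j ∈ range (n + 1), (j : R)) * 2 = ((n : R) + 1) * n := by
      have h := congrArg (Nat.cast : ℕ → R) (sum_range_id_mul_two (n + 1))
      push_cast [Nat.add_sub_cancel] at h
      exact h
    push_cast
    rw [sum_range_succ_mul_sub]
    linear_combination ih + 3 * gauss

end CommRing

section Field

variable {K : Type*} [Field K] {x : K} {N : ℕ}

theorem geom_sum_eq_zero_of_pow_eq_one (hxN : x ^ N = 1) (hx : x ≠ 1) :
    ∑ j ∈ range N, x ^ j = 0 := by
  rw [geom_sum_eq hx, hxN, sub_self, zero_div]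

theorem sum_Ico_one_pow_eq_neg_one (hN : N ≠ 0) (hxN : x ^ N = 1) (hx : x ≠ 1) :
    ∑ l ∈ Ico 1 N, x ^ l = -1 := by
  rw [sum_Ico_eq_sub _ (Nat.one_le_iff_ne_zero.mpr hN), sum_range_one, pow_zero,
    geom_sum_eq_zero_of_pow_eq_one hxN hx, zero_sub]

theorem two_mul_mul_div_sub_one_sq (hxN : x ^ N = 1) (hx : x ≠ 1) :
    2 * N * (x / (x - 1) ^ 2) = ∑ j ∈ range N, (j : K) * x ^ j * (N - j) := by
  have h := sub_one_sq_mul_sum_range_mul_pow_mul_sub x N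
  rw [geom_sum_eq_zero_of_pow_eq_one hxN hx, pow_succ x N, hxN] at h
  have hx' : x - 1 ≠ 0 := sub_ne_zero.mpr hx
  field_simp
  linear_combination -h

theorem IsPrimitiveRoot.sum_Ico_pow_div_pow_sub_one_sq [CharZero K] {ζ : K}
    (hζ : IsPrimitiveRoot ζ N) (hN : N ≠ 0) :
    ∑ l ∈ Ico 1 N, ζ ^ l / (ζ ^ l - 1) ^ 2 = (1 - (N : K) ^ 2) / 12 := by
  have hpow (m : ℕ) : (ζ ^ m) ^ N = 1 := by rw [pow_right_comm, hζ.pow_eq_one, one_pow]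
  have hterm (l : ℕ) (hl : l ∈ Ico 1 N) :
      2 * N * (ζ ^ l / (ζ ^ l - 1) ^ 2) = ∑ j ∈ range N, (j : K) * (ζ ^ l) ^ j * (N - j) := by
    obtain ⟨hl1, hlN⟩ := mem_Ico.mp hl
    exact two_mul_mul_div_sub_one_sq (hpow l)
      (hζ.pow_ne_one_of_pos_of_lt (Nat.one_le_iff_ne_zero.mp hl1) hlN)
  have hinner (j : ℕ) (hj : j ∈ range N) : (j : K) * ∑ l ∈ Ico 1 N, (ζ ^ l) ^ j = -j := by
    rcases eq_or_ne j 0 with rfl | hj0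
    · simp
    simp_rw [← pow_mul, mul_comm _ j, pow_mul]
    rw [sum_Ico_one_pow_eq_neg_one hN (hpow j)
      (hζ.pow_ne_one_of_pos_of_lt hj0 (mem_range.mp hj)), mul_neg_one]
  have hsum : 2 * N * ∑ l ∈ Ico 1 N, ζ ^ l / (ζ ^ l - 1) ^ 2 =
      -∑ j ∈ range N, (j : K) * (N - j) := by
    rw [mul_sum, sum_congr rfl hterm, sum_comm, ← sum_neg_distrib]
    refine sum_congr rfl fun j hj => ?_
    rw [← neg_mul, ← hinner j hj, mul_sum, sum_mul]
  have hN' : (N : K) ≠ 0 := Nat.cast_ne_zero.mpr hN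
  refine mul_left_cancel₀ (mul_ne_zero (by norm_num : (12 : K) ≠ 0) hN') ?_
  linear_combination 6 * hsum - six_mul_sum_range_mul_sub (R := K) N

end Field

theorem S_two_one (N : ℕ) (hN : 2 ≤ N) : S N 2 1 = (1 - (N : ℂ) ^ 2) / 12 := by
  simp only [S, mul_one]
  exact (Complex.isPrimitiveRoot_exp N (by omega)).sum_Ico_pow_div_pow_sub_one_sq (by omega)
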